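/- arXiv:2501.13825 — 3 statements merged into one kernel-verified Lean document; each statement's English description precedes it below -/
import Mathlib

section
/- Let g be a continuous piecewise affine function on ℝᴺ with axis-aligned grid regions indexed by (b₁,…,b_N) ∈ {0,…,M}ᴺ, where on region b the function is a₀^b + Σₙ aₙ^b tₙ. Then for each n ≥ 1, the slope coefficient aₙ^b depends only on the index bₙ, i.e., if b and b' satisfy bₙ = bₙ' then aₙ^b = aₙ^{b'}. -/
/-!
Two affine functions that agree on a hyperplane `{x m = T}` have the same slope in every
direction `n ≠ m`. Hence `b ↦ aₙ^b` does not change when `b` moves one step in a direction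
`m ≠ n`; chaining such steps, it does not change when any coordinate other than `n` is
altered, so it depends only on `bₙ`.
-/

open Function

theorem dotProduct_coeff_eq_of_eq_on_hyperplane {R ι : Type*} [CommRing R] [Fintype ι]
    [DecidableEq ι] {c c' : R} {p q : ι → R} {m n : ι} (hmn : m ≠ n) (T : R)
    (h : ∀ x : ι → R, x m = T → c + p ⬝ᵥ x = c' + q ⬝ᵥ x) : p n = q n := by
  have h₀ := h (Pi.single m T) (by simp)
  have h₁ := h (Pi.single m T + Pi.single n 1) (by simp [Pi.single_eq_of_ne hmn])
  simp only [dotProduct_add, dotProduct_single, mul_one] at h₀ h₁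
  linear_combination h₁ - h₀

theorem Fin.apply_eq_apply_zero_of_castSucc {β : Type*} {M : ℕ} {g : Fin (M + 1) → β}
    (h : ∀ i : Fin M, g i.castSucc = g i.succ) (i : Fin (M + 1)) : g i = g 0 :=
  Fin.induction rfl (fun i hi => (h i).symm.trans hi) i

theorem apply_update_eq_of_castSucc {ι β : Type*} [DecidableEq ι] {M : ℕ}
    {f : (ι → Fin (M + 1)) → β} {m : ι}
    (h : ∀ (x : ι → Fin (M + 1)) (i : Fin M),
      f (update x m i.castSucc) = f (update x m i.succ))
    (x : ι → Fin (M + 1)) (k : Fin (M + 1)) : f (update x m k) = f x := by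
  have hg := Fin.apply_eq_apply_zero_of_castSucc (g := fun j => f (update x m j)) (h x)
  rw [hg k, ← hg (x m), update_eq_self]

theorem apply_eq_apply_of_update_invariant {ι α β : Type*} [Fintype ι] [DecidableEq ι]
    {f : (ι → α) → β} {n : ι} (hf : ∀ x m k, m ≠ n → f (update x m k) = f x)
    {x y : ι → α} (hxy : x n = y n) : f x = f y := by
  suffices ∀ s : Finset ι, f (s.piecewise y x) = f x by
    simpa using (this Finset.univ).symm
  intro s
  induction s using Finset.induction_on with
  | empty => simp
  | insert m s hms ih =>
    rw [Finset.piecewise_insert]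
    by_cases hmn : m = n
    · subst hmn
      rw [← hxy, ← Finset.piecewise_eq_of_notMem s y x hms, update_eq_self, ih]
    · rw [hf _ _ _ hmn, ih]

/-- For a continuous grid piecewise affine function on ℝᴺ (regions indexed by
`b ∈ {0,…,M}ᴺ`, affine piece `a₀^b + ∑ₙ aₙ^b tₙ` on region `b`, with adjacent regions
agreeing on their shared facet `{t : tₙ = breakpoint}`), each slope coefficient
`aₙ^b` depends only on the index `bₙ`. -/
theorem stmt_7 (N M : ℕ) (t : Fin N → ℕ → ℝ)
    (a₀ : (Fin N → Fin (M + 1)) → ℝ)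
    (a : (Fin N → Fin (M + 1)) → Fin N → ℝ)
    (hcont : ∀ (b b' : Fin N → Fin (M + 1)) (n : Fin N),
      (∀ m, m ≠ n → b m = b' m) → (b' n : ℕ) = (b n : ℕ) + 1 →
      ∀ x : Fin N → ℝ, x n = t n (b n) →
        a₀ b + ∑ i, a b i * x i = a₀ b' + ∑ i, a b' i * x i) :
    ∀ (n : Fin N) (b b' : Fin N → Fin (M + 1)), b n = b' n → a b n = a b' n := by
  intro n b b' hbn
  have step : ∀ m, m ≠ n → ∀ (c : Fin N → Fin (M + 1)) (i : Fin M),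
      a (update c m i.castSucc) n = a (update c m i.succ) n := fun m hmn c i =>
    dotProduct_coeff_eq_of_eq_on_hyperplane hmn _ <| hcont _ _ m
      (fun k hkm => by simp [update_of_ne hkm]) (by simp)
  exact apply_eq_apply_of_update_invariant (f := fun c => a c n)
    (fun c m k hmn => apply_update_eq_of_castSucc (f := fun c => a c n) (step m hmn) c k) hbn
end

section
/- With the setup of the grid piecewise affine function and writing aₙ^{bₙ} for the slope in direction n on segment bₙ, continuity implies a₀^{b₁…b_N} = a₀^{0…0} + Σ_{k=1}^{N} Σ_{b'=0}^{b_k - 1} t_k^{b'} (a_k^{b'} - a_k^{b'+1}). -/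
/-!
Crossing the facet `x_n = t_n^{b_n}` from region `b` to its neighbour `b + e_n`, the two affine
pieces agree on that hyperplane, so the intercept jumps by `t_n^{b_n} (a_n^{b_n} - a_n^{b_n+1})`.
Hence `a₀^b` minus the double sum is invariant under unit steps in the grid, and every region
is reached from `0…0` by such steps.
-/

open Finset Function

theorem eq_of_forall_succ_eq {ι α : Type*} [Finite ι] [DecidableEq ι] {M : ℕ}
    (f : (ι → Fin (M + 1)) → α)
    (hf : ∀ (b b' : ι → Fin (M + 1)) (n : ι),
      (∀ m, m ≠ n → b m = b' m) → (b' n : ℕ) = b n + 1 → f b = f b')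
    (b : ι → Fin (M + 1)) : f b = f 0 := by
  induction b using WellFoundedLT.induction with
  | _ b ih =>
  by_cases hb : b = 0
  · rw [hb]
  obtain ⟨n, hn⟩ : ∃ n, b n ≠ 0 := by simpa [funext_iff] using hb
  set c := update b n ((b n).pred hn).castSucc
  have hcb : c < b := update_lt_self_iff.2 (Fin.castSucc_pred_lt hn)
  have hcn : (b n : ℕ) = c n + 1 := by
    simpa [c] using (Nat.succ_pred_eq_of_ne_zero (Fin.val_ne_zero_iff.2 hn)).symm
  rw [← ih c hcb]
  exact (hf c b n (fun m hm => update_of_ne hm _ _) hcn).symm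

theorem intercept_eq_of_eq_on_hyperplane {ι R : Type*} [Fintype ι] [DecidableEq ι] [CommRing R]
    (c₀ c₀' s : R) (c c' : ι → R) (n : ι)
    (h : ∀ x : ι → R, x n = s → c₀ + ∑ i, c i * x i = c₀' + ∑ i, c' i * x i) :
    c₀' = c₀ + s * (c n - c' n) := by
  have hx := h (Pi.single n s) (by simp)
  simp only [Pi.single_apply, mul_ite, mul_zero, sum_ite_eq', mem_univ, if_true] at hx
  linear_combination -hx

theorem sum_sum_range_eq_add {ι β : Type*} [Fintype ι] [DecidableEq ι] [AddCommMonoid β]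
    (g : ι → ℕ → β) (b b' : ι → ℕ) (n : ι)
    (hm : ∀ m, m ≠ n → b m = b' m) (hn : b' n = b n + 1) :
    ∑ k, ∑ j ∈ range (b' k), g k j = ∑ k, ∑ j ∈ range (b k), g k j + g n (b n) := by
  rw [Fintype.sum_eq_add_sum_compl n,
    Fintype.sum_eq_add_sum_compl n (fun k => ∑ j ∈ range (b k), g k j), hn,
    sum_range_succ, add_right_comm]
  congr 2
  exact sum_congr rfl fun m hm' => by rw [hm m (by simpa using hm')]

/-- For a continuous grid piecewise affine function on ℝᴺ whose slopes `aₙ^{bₙ}`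
depend only on the coordinate-wise segment index, continuity across facets implies
`a₀^{b} = a₀^{0…0} + ∑ₖ ∑_{b'=0}^{b_k-1} t_k^{b'} (a_k^{b'} - a_k^{b'+1})`. -/
theorem stmt_8 (N M : ℕ) (t : Fin N → ℕ → ℝ)
    (a₀ : (Fin N → Fin (M + 1)) → ℝ)
    (a : Fin N → ℕ → ℝ)
    (hcont : ∀ (b b' : Fin N → Fin (M + 1)) (n : Fin N),
      (∀ m, m ≠ n → b m = b' m) → (b' n : ℕ) = (b n : ℕ) + 1 →
      ∀ x : Fin N → ℝ, x n = t n (b n) →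
        a₀ b + ∑ i, a i (b i) * x i = a₀ b' + ∑ i, a i (b' i) * x i) :
    ∀ b : Fin N → Fin (M + 1),
      a₀ b = a₀ (fun _ => 0) +
        ∑ k, ∑ j ∈ Finset.range (b k), t k j * (a k j - a k (j + 1)) := by
  intro b
  have key := eq_of_forall_succ_eq
    (fun b => a₀ b - ∑ k, ∑ j ∈ range (b k), t k j * (a k j - a k (j + 1))) ?_ b
  · simp only [Pi.zero_apply, Fin.val_zero, range_zero, sum_empty, sum_const_zero, sub_zero,
      sub_eq_iff_eq_add] at key
    exact key
  intro b b' n hm hn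
  have hjump := intercept_eq_of_eq_on_hyperplane _ _ _ _ _ n (hcont b b' n hm hn)
  rw [hjump, sum_sum_range_eq_add _ (fun k => (b k : ℕ)) (fun k => b' k) n
    (fun m hmn => by rw [hm m hmn]) hn, hn]
  ring
end

section
/- A continuous grid piecewise affine function on ℝᴺ with M breakpoints per coordinate (hence (M+1)ᴺ regions) is determined by (N+1)(M+1) parameters: the slopes aₙ^{bₙ} for n = 1,…,N and bₙ = 0,…,M, together with the single intercept a₀^{0…0}. -/
/-! The slopes being shared, two continuous grid piecewise affine functions can only differ
by their intercepts. Continuity across the facet `xₙ = tₙ^{bₙ}` between neighbouring regions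
fixes the jump of the intercept there as `(aₙ^{bₙ} - aₙ^{bₙ+1}) tₙ^{bₙ}`, which depends on the
slopes alone; so the difference of the two intercepts does not change between neighbouring
regions, and since every region is reached from `(0,…,0)` by such steps it vanishes everywhere. -/

theorem grid_apply_eq_apply_zero_of_step_invariant {ι α : Type*} [Fintype ι] [DecidableEq ι] {M : ℕ}
    (f : (ι → Fin (M + 1)) → α)
    (hf : ∀ (b b' : ι → Fin (M + 1)) (n : ι),
      (∀ m, m ≠ n → b m = b' m) → (b' n : ℕ) = (b n : ℕ) + 1 → f b = f b')
    (b : ι → Fin (M + 1)) : f b = f (fun _ => 0) := by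
  induction hk : ∑ m, (b m : ℕ) generalizing b with
  | zero =>
    congr
    funext m
    exact Fin.ext (Finset.sum_eq_zero_iff.mp hk m (Finset.mem_univ m))
  | succ k ih =>
    obtain ⟨n, hn⟩ : ∃ n, b n ≠ 0 := by
      by_contra! h
      simp [h] at hk
    obtain ⟨j, hj⟩ := Fin.exists_succ_eq.mpr hn
    set c := Function.update b n j.castSucc
    have hcb : ∀ m, m ≠ n → c m = b m := fun m hm => Function.update_of_ne hm _ _
    have hcn : (b n : ℕ) = (c n : ℕ) + 1 := by simp [c, ← hj]
    have hsum : ∑ m, (b m : ℕ) = ∑ m, ((c m : ℕ) + if m = n then 1 else 0) :=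
      Finset.sum_congr rfl fun m _ => by
        by_cases hm : m = n
        · subst hm; simp [hcn]
        · simp [hcb m hm, hm]
    rw [Finset.sum_add_distrib, Finset.sum_ite_eq', if_pos (Finset.mem_univ n)] at hsum
    rw [← hf c b n hcb hcn]
    exact ih c (by omega)

theorem sub_intercept_eq_of_eqOn_hyperplane {ι : Type*} [Fintype ι] [DecidableEq ι]
    {c₀ c₀' T : ℝ} {c c' : ι → ℝ} {n : ι}
    (h : ∀ x : ι → ℝ, x n = T → c₀ + ∑ i, c i * x i = c₀' + ∑ i, c' i * x i) :
    c₀' - c₀ = (c n - c' n) * T := by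
  have hT := h (Pi.single n T) (by simp)
  simp only [Pi.single_apply, mul_ite, mul_zero, Finset.sum_ite_eq', Finset.mem_univ,
    if_true] at hT
  linarith

/-- A continuous grid piecewise affine function on ℝᴺ with `M` breakpoints per
coordinate is determined by the `(N+1)(M+1)` parameters: the slopes `aₙ^{bₙ}`
(`n = 1,…,N`, `bₙ = 0,…,M`) and the single intercept `a₀^{0…0}`. Two such continuous
functions with the same slope parameters and the same base intercept coincide on
every region. -/
theorem stmt_9 (N M : ℕ) (t : Fin N → ℕ → ℝ)
    (a₀ a₀' : (Fin N → Fin (M + 1)) → ℝ)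
    (a a' : (Fin N → Fin (M + 1)) → Fin N → ℝ)
    (hcont : ∀ (b b' : Fin N → Fin (M + 1)) (n : Fin N),
      (∀ m, m ≠ n → b m = b' m) → (b' n : ℕ) = (b n : ℕ) + 1 →
      ∀ x : Fin N → ℝ, x n = t n (b n) →
        a₀ b + ∑ i, a b i * x i = a₀ b' + ∑ i, a b' i * x i)
    (hcont' : ∀ (b b' : Fin N → Fin (M + 1)) (n : Fin N),
      (∀ m, m ≠ n → b m = b' m) → (b' n : ℕ) = (b n : ℕ) + 1 →
      ∀ x : Fin N → ℝ, x n = t n (b n) →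
        a₀' b + ∑ i, a' b i * x i = a₀' b' + ∑ i, a' b' i * x i)
    -- the slope parameters `aₙ^{bₙ}` agree (slopes depend only on `bₙ`):
    (hslope : ∀ (n : Fin N) (b b' : Fin N → Fin (M + 1)),
      b n = b' n → a b n = a' b' n)
    -- the base intercepts `a₀^{0…0}` agree:
    (hbase : a₀ (fun _ => 0) = a₀' (fun _ => 0)) :
    ∀ (b : Fin N → Fin (M + 1)) (x : Fin N → ℝ),
      a₀ b + ∑ i, a b i * x i = a₀' b + ∑ i, a' b i * x i := by
  have ha : a = a' := funext fun b => funext fun n => hslope n b b rfl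
  subst ha
  have hintercept : ∀ b, a₀ b - a₀' b = a₀ (fun _ => 0) - a₀' (fun _ => 0) :=
    grid_apply_eq_apply_zero_of_step_invariant (fun b => a₀ b - a₀' b) fun b b' n hm hn => by
      have hjump := sub_intercept_eq_of_eqOn_hyperplane (hcont b b' n hm hn)
      have hjump' := sub_intercept_eq_of_eqOn_hyperplane (hcont' b b' n hm hn)
      linarith
  intro b x
  linarith [hintercept b]
end
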